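/- arXiv:1005.1157 — 3 statements merged into one kernel-verified Lean document; each statement's English description precedes it below -/
import Mathlib

section
/- Let 𝔲* = ⟨α, β, γ, δ⟩ with dα = dβ = dδ = 0, dγ = -α∧β, and let the group {±1} act on 𝔲* by (-1)·α = -α, (-1)·β = -β, (-1)·γ = γ, (-1)·δ = δ, extended to Λ𝔲* as algebra automorphisms commuting with d. Then the second cohomology of the invariant subcomplex (Λ𝔲*)^{±1} vanishes: H²((Λ𝔲*)^{±1}) = 0. -/
open scoped BigOperators

/-- The `n`-fold wedge power of a `2`-form `β`, as a `2n`-multilinear expression: up to a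
nonzero constant, `β^n (v) = ∑_σ sign σ • ∏ᵢ β (v_{σ(2i)}, v_{σ(2i+1)})`. -/
noncomputable def wedgePow {V : Type*} (β : (Fin 2 → V) → ℝ) (n : ℕ)
    (v : Fin (n * 2) → V) : ℝ :=
  ∑ σ : Equiv.Perm (Fin (n * 2)),
    ((Equiv.Perm.sign σ : ℤ) : ℝ) *
      ∏ i : Fin n, β ![v (σ (finProdFinEquiv (i, 0))), v (σ (finProdFinEquiv (i, 1)))]

/-- `𝔲` is the Lie algebra `Fin 4 → ℝ` with bracket `c`; the conditions below express that
the dual basis `α, β, γ, δ` (coordinates `0,1,2,3`) satisfies `dα = dβ = dδ = 0` and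
`dγ = -α∧β` for the Chevalley–Eilenberg differential `(dφ)(x,y) = -φ [x,y]`. -/
def IsHeisenbergTimesLine (c : (Fin 4 → ℝ) →ₗ[ℝ] (Fin 4 → ℝ) →ₗ[ℝ] (Fin 4 → ℝ)) : Prop :=
  (∀ x, c x x = 0) ∧
  (∀ x y, c x y 0 = 0) ∧
  (∀ x y, c x y 1 = 0) ∧
  (∀ x y, c x y 3 = 0) ∧
  (∀ x y : Fin 4 → ℝ, -(c x y 2) = -(x 0 * y 1 - x 1 * y 0))

/-- The Chevalley–Eilenberg differential of a `2`-form `ω` vanishes: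
`(dω)(x,y,z) = -ω([x,y],z) + ω([x,z],y) - ω([y,z],x) = 0`. -/
def IsCEClosed {k : ℕ} (c : (Fin k → ℝ) →ₗ[ℝ] (Fin k → ℝ) →ₗ[ℝ] (Fin k → ℝ))
    (ω : (Fin k → ℝ) [⋀^Fin 2]→ₗ[ℝ] ℝ) : Prop :=
  ∀ x y z : Fin k → ℝ, -ω ![c x y, z] + ω ![c x z, y] - ω ![c y z, x] = 0

/-- The involution of `𝔲 = Fin 4 → ℝ` dual to the action of `-1 ∈ {±1}` on `𝔲*` given by
`α ↦ -α, β ↦ -β, γ ↦ γ, δ ↦ δ`: it negates the first two coordinates. -/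
def uInvolution (x : Fin 4 → ℝ) : Fin 4 → ℝ :=
  ![-(x 0), -(x 1), x 2, x 3]

/-!
With `e₀, …, e₃` the basis dual to `α, β, γ, δ`, split `𝔲 = span(e₀, e₁) ⊕ span(e₂, e₃)` into
the `(-1)`- and `(+1)`-eigenspaces of the involution; an invariant `2`-form pairs the two
summands trivially, so it is `A α∧β + B γ∧δ`. Closedness evaluated on `(e₀, e₁, e₃)` reads
`-ω([e₀, e₁], e₃) = -B = 0`, since `e₃` is central and `[e₀, e₁] = e₂`. Hence
`ω = A α∧β = d(-A γ)`, and `γ` is invariant.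
-/

theorem Function.update_fin_two_zero {α : Type*} (x y z : α) :
    Function.update ![x, y] 0 z = ![z, y] := by
  ext i; fin_cases i <;> rfl

theorem Function.update_fin_two_one {α : Type*} (x y z : α) :
    Function.update ![x, y] 1 z = ![x, z] := by
  ext i; fin_cases i <;> rfl

namespace AlternatingMap

section CommSemiring

variable {R M N : Type*} [CommSemiring R] [AddCommMonoid M] [Module R M] [AddCommMonoid N]
  [Module R N]

def toLinearMap₂ (ω : M [⋀^Fin 2]→ₗ[R] N) : M →ₗ[R] M →ₗ[R] N :=
  LinearMap.mk₂ R (fun x y => ω ![x, y])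
    (fun x x' y => by
      simpa only [Function.update_fin_two_zero] using ω.map_update_add ![x, y] 0 x x')
    (fun a x y => by
      simpa only [Function.update_fin_two_zero] using ω.map_update_smul ![x, y] 0 a x)
    (fun x y y' => by
      simpa only [Function.update_fin_two_one] using ω.map_update_add ![x, y] 1 y y')
    (fun a x y => by
      simpa only [Function.update_fin_two_one] using ω.map_update_smul ![x, y] 1 a y)

@[simp]
theorem toLinearMap₂_apply (ω : M [⋀^Fin 2]→ₗ[R] N) (x y : M) : ω.toLinearMap₂ x y = ω ![x, y] :=
  rfl

theorem map_fin_two_self (ω : M [⋀^Fin 2]→ₗ[R] N) (x : M) : ω ![x, x] = 0 :=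
  ω.map_eq_zero_of_eq ![x, x] (i := 0) (j := 1) rfl Fin.zero_ne_one

end CommSemiring

variable {R M N : Type*} [CommRing R] [AddCommGroup M] [Module R M] [AddCommGroup N] [Module R N]

theorem map_fin_two_swap (ω : M [⋀^Fin 2]→ₗ[R] N) (x y : M) : ω ![y, x] = -ω ![x, y] := by
  simpa using ω.map_swap ![x, y] Fin.zero_ne_one

theorem map_smul_add_smul_fin_two (ω : M [⋀^Fin 2]→ₗ[R] N) (a b c d : R) (u v : M) :
    ω ![a • u + b • v, c • u + d • v] = (a * d - b * c) • ω ![u, v] := by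
  simp only [← toLinearMap₂_apply, map_add, map_smul, LinearMap.add_apply, LinearMap.smul_apply]
  simp only [toLinearMap₂_apply, map_fin_two_self, ω.map_fin_two_swap u v]
  module

theorem map_fin_two_eq_zero_of_invariant [IsAddTorsionFree N] (ω : M [⋀^Fin 2]→ₗ[R] N)
    {σ : M → M} (hω : ∀ x y, ω ![σ x, σ y] = ω ![x, y]) {u v : M} (hu : σ u = -u)
    (hv : σ v = v) : ω ![u, v] = 0 := by
  have h := hω u v
  rw [hu, hv, ← toLinearMap₂_apply, map_neg, LinearMap.neg_apply, toLinearMap₂_apply] at h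
  exact neg_eq_self.mp h

end AlternatingMap

theorem IsHeisenbergTimesLine.apply_eq {c : (Fin 4 → ℝ) →ₗ[ℝ] (Fin 4 → ℝ) →ₗ[ℝ] (Fin 4 → ℝ)}
    (hc : IsHeisenbergTimesLine c) (x y : Fin 4 → ℝ) :
    c x y = (x 0 * y 1 - x 1 * y 0) • Pi.single 2 1 := by
  obtain ⟨-, h0, h1, h3, h2⟩ := hc
  ext i
  fin_cases i
  · simp [h0]
  · simp [h1]
  · simpa using neg_inj.mp (h2 x y)
  · simp [h3]

theorem IsCEClosed.map_single_two_single_three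
    {c : (Fin 4 → ℝ) →ₗ[ℝ] (Fin 4 → ℝ) →ₗ[ℝ] (Fin 4 → ℝ)} (hc : IsHeisenbergTimesLine c) {ω : (Fin 4 → ℝ) [⋀^Fin 2]→ₗ[ℝ] ℝ} (hω : IsCEClosed c ω) :
    ω ![Pi.single 2 1, Pi.single 3 1] = 0 := by
  have h := hω (Pi.single 0 1) (Pi.single 1 1) (Pi.single 3 1)
  simp only [hc.apply_eq] at h
  simpa [← AlternatingMap.toLinearMap₂_apply] using h

def uOdd (x : Fin 4 → ℝ) : Fin 4 → ℝ :=
  x 0 • Pi.single 0 1 + x 1 • Pi.single 1 1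

def uEven (x : Fin 4 → ℝ) : Fin 4 → ℝ :=
  x 2 • Pi.single 2 1 + x 3 • Pi.single 3 1

theorem uOdd_add_uEven (x : Fin 4 → ℝ) : uOdd x + uEven x = x := by
  ext i; fin_cases i <;> simp [uOdd, uEven]

theorem uInvolution_uOdd (x : Fin 4 → ℝ) : uInvolution (uOdd x) = -uOdd x := by
  ext i; fin_cases i <;> simp [uInvolution, uOdd]

theorem uInvolution_uEven (x : Fin 4 → ℝ) : uInvolution (uEven x) = uEven x := by
  ext i; fin_cases i <;> simp [uInvolution, uEven]

open AlternatingMap in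
theorem invariant_form_apply {ω : (Fin 4 → ℝ) [⋀^Fin 2]→ₗ[ℝ] ℝ}
    (hω : ∀ x y, ω ![uInvolution x, uInvolution y] = ω ![x, y]) (x y : Fin 4 → ℝ) :
    ω ![x, y] = (x 0 * y 1 - x 1 * y 0) * ω ![Pi.single 0 1, Pi.single 1 1] +
      (x 2 * y 3 - x 3 * y 2) * ω ![Pi.single 2 1, Pi.single 3 1] := by
  have hmixed (u v : Fin 4 → ℝ) : ω ![uOdd u, uEven v] = 0 :=
    ω.map_fin_two_eq_zero_of_invariant hω (uInvolution_uOdd u) (uInvolution_uEven v)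
  calc ω ![x, y] = ω ![uOdd x + uEven x, uOdd y + uEven y] := by
        rw [uOdd_add_uEven, uOdd_add_uEven]
    _ = ω ![uOdd x, uOdd y] + ω ![uEven x, uEven y] := by
        simp only [← toLinearMap₂_apply, map_add, LinearMap.add_apply]
        simp only [toLinearMap₂_apply, ω.map_fin_two_swap (uOdd y) (uEven x), hmixed, neg_zero,
          add_zero, zero_add]
    _ = _ := by simp only [uOdd, uEven, map_smul_add_smul_fin_two, smul_eq_mul]

theorem invariant_closed_form_apply {c : (Fin 4 → ℝ) →ₗ[ℝ] (Fin 4 → ℝ) →ₗ[ℝ] (Fin 4 → ℝ)}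
    (hc : IsHeisenbergTimesLine c) {ω : (Fin 4 → ℝ) [⋀^Fin 2]→ₗ[ℝ] ℝ}
    (hinv : ∀ x y, ω ![uInvolution x, uInvolution y] = ω ![x, y]) (hclosed : IsCEClosed c ω)
    (x y : Fin 4 → ℝ) :
    ω ![x, y] = (x 0 * y 1 - x 1 * y 0) * ω ![Pi.single 0 1, Pi.single 1 1] := by
  rw [invariant_form_apply hinv, hclosed.map_single_two_single_three hc, mul_zero, add_zero]

theorem invariant_H2_vanishes_general
    (c : (Fin 4 → ℝ) →ₗ[ℝ] (Fin 4 → ℝ) →ₗ[ℝ] (Fin 4 → ℝ))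
    (hc : IsHeisenbergTimesLine c) :
    ∀ ω : (Fin 4 → ℝ) [⋀^Fin 2]→ₗ[ℝ] ℝ,
      (∀ x y : Fin 4 → ℝ, ω ![uInvolution x, uInvolution y] = ω ![x, y]) →
      IsCEClosed c ω →
      ∃ φ : (Fin 4 → ℝ) →ₗ[ℝ] ℝ,
        (∀ x : Fin 4 → ℝ, φ (uInvolution x) = φ x) ∧
        ∀ x y : Fin 4 → ℝ, ω ![x, y] = -(φ (c x y)) := by
  intro ω hinv hclosed
  refine ⟨-ω ![Pi.single 0 1, Pi.single 1 1] • LinearMap.proj 2, fun x => by simp [uInvolution],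
    fun x y => ?_⟩
  rw [invariant_closed_form_apply hc hinv hclosed x y, hc.apply_eq]
  simp [mul_comm]

/-- Let `𝔲* = ⟨α, β, γ, δ⟩` with `dα = dβ = dδ = 0`, `dγ = -α∧β`, and let `{±1}` act by
`(-1)·α = -α, (-1)·β = -β, (-1)·γ = γ, (-1)·δ = δ`, extended as algebra automorphisms
commuting with `d`. Then `H²` of the invariant subcomplex `(Λ𝔲*)^{±1}` vanishes: every
invariant closed `2`-form is the differential of an invariant `1`-form. -/
theorem invariant_H2_vanishes
    (c : (Fin 4 → ℝ) →ₗ[ℝ] (Fin 4 → ℝ) →ₗ[ℝ] (Fin 4 → ℝ))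
    (hc : IsHeisenbergTimesLine c)
    (hauto : ∀ x y : Fin 4 → ℝ, c (uInvolution x) (uInvolution y) = uInvolution (c x y)) :
    ∀ ω : (Fin 4 → ℝ) [⋀^Fin 2]→ₗ[ℝ] ℝ,
      (∀ x y : Fin 4 → ℝ, ω ![uInvolution x, uInvolution y] = ω ![x, y]) →
      IsCEClosed c ω →
      ∃ φ : (Fin 4 → ℝ) →ₗ[ℝ] ℝ,
        (∀ x : Fin 4 → ℝ, φ (uInvolution x) = φ x) ∧
        ∀ x y : Fin 4 → ℝ, ω ![x, y] = -(φ (c x y)) :=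
  invariant_H2_vanishes_general c hc
end

section
/- The 8-dimensional Lie algebra 𝔥 with structure as above (dσ = dτ = 0, dζ₁ = τ∧ζ₂, dζ₂ = -τ∧ζ₁, dη₁ = τ∧η₂, dη₂ = -τ∧η₁, dθ₁ = -ζ₁∧η₁ + ζ₂∧η₂, dθ₂ = -ζ₁∧η₂ - ζ₂∧η₁) admits no invariant symplectic form: there is no closed ω ∈ Λ²𝔥* that is nondegenerate as a bilinear form on 𝔥. -/
/-!
If `ω` is closed and `z` is central, closedness at `(x, y, z)` collapses to `ω([x, y], z) = 0`,
so `ω(z, ·)` annihilates the derived algebra. Nondegeneracy makes `z ↦ ω(z, ·)` injective, hence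
`dim 𝔷(𝔥) + dim [𝔥, 𝔥] ≤ dim 𝔥`. For `𝔥` the center contains the basis vectors dual to
`σ, θ₁, θ₂` and the derived algebra those dual to `ζ₁, ζ₂, η₁, η₂, θ₁, θ₂`, and `3 + 6 > 8`.
-/

open scoped BigOperators

/-- `𝔥` is the `8`-dimensional Lie algebra `Fin 8 → ℝ` with bracket `c`; the conditions
below express, via the Chevalley–Eilenberg differential `(dφ)(x,y) = -φ [x,y]`, that the
dual basis `σ, τ, ζ₁, ζ₂, η₁, η₂, θ₁, θ₂` (coordinates `0,…,7`) satisfies `dσ = dτ = 0`,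
`dζ₁ = τ∧ζ₂`, `dζ₂ = -τ∧ζ₁`, `dη₁ = τ∧η₂`, `dη₂ = -τ∧η₁`,
`dθ₁ = -ζ₁∧η₁ + ζ₂∧η₂`, `dθ₂ = -ζ₁∧η₂ - ζ₂∧η₁`. -/
def IsLieAlgebraH (c : (Fin 8 → ℝ) →ₗ[ℝ] (Fin 8 → ℝ) →ₗ[ℝ] (Fin 8 → ℝ)) : Prop :=
  (∀ x, c x x = 0) ∧
  (∀ x y, c x y 0 = 0) ∧
  (∀ x y, c x y 1 = 0) ∧
  (∀ x y : Fin 8 → ℝ, -(c x y 2) = x 1 * y 3 - x 3 * y 1) ∧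
  (∀ x y : Fin 8 → ℝ, -(c x y 3) = -(x 1 * y 2 - x 2 * y 1)) ∧
  (∀ x y : Fin 8 → ℝ, -(c x y 4) = x 1 * y 5 - x 5 * y 1) ∧
  (∀ x y : Fin 8 → ℝ, -(c x y 5) = -(x 1 * y 4 - x 4 * y 1)) ∧
  (∀ x y : Fin 8 → ℝ, -(c x y 6) = -(x 2 * y 4 - x 4 * y 2) + (x 3 * y 5 - x 5 * y 3)) ∧
  (∀ x y : Fin 8 → ℝ, -(c x y 7) = -(x 2 * y 5 - x 5 * y 2) - (x 3 * y 4 - x 4 * y 3))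

open Module

namespace AlternatingMap

variable {R M : Type*} [CommRing R] [AddCommGroup M] [Module R M]

def toBilin (ω : M [⋀^Fin 2]→ₗ[R] R) : M →ₗ[R] M →ₗ[R] R :=
  LinearMap.mk₂ R (fun x y => ω ![x, y])
    (fun _ _ _ => ω.map_vecCons_add _ _ _) (fun _ _ _ => ω.map_vecCons_smul _ _ _)
    (fun x _ _ => (ω.curryLeft x).map_vecCons_add _ _ _)
    (fun _ x _ => (ω.curryLeft x).map_vecCons_smul _ _ _)

@[simp]
theorem toBilin_apply (ω : M [⋀^Fin 2]→ₗ[R] R) (x y : M) : ω.toBilin x y = ω ![x, y] := rfl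

theorem toBilin_swap (ω : M [⋀^Fin 2]→ₗ[R] R) (x y : M) :
    ω.toBilin y x = -ω.toBilin x y := by
  simpa [eq_neg_iff_add_eq_zero, add_comm] using ω.map_swap ![x, y] (i := 0) (j := 1) (by decide)

end AlternatingMap

theorem card_le_finrank_of_forall_single_mem {K ι : Type*} [Field K] [Fintype ι]
    [DecidableEq ι] (p : Submodule K (ι → K)) (S : Finset ι)
    (h : ∀ i ∈ S, Pi.single i 1 ∈ p) : S.card ≤ finrank K p := by
  have hli : LinearIndependent K fun i : S => (Pi.single (i : ι) (1 : K) : ι → K) :=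
    (Pi.linearIndependent_single_one ι K).comp _ Subtype.val_injective
  calc S.card
      = finrank K (Submodule.span K (Set.range fun i : S => Pi.single (i : ι) (1 : K))) := by
        rw [finrank_span_eq_card hli, Fintype.card_coe]
    _ ≤ finrank K p := Submodule.finrank_mono <| Submodule.span_le.mpr <| by
        rintro _ ⟨i, rfl⟩
        exact h i i.2

section Bracket

variable {k : ℕ} (c : (Fin k → ℝ) →ₗ[ℝ] (Fin k → ℝ) →ₗ[ℝ] (Fin k → ℝ))

def bracketCenter : Submodule ℝ (Fin k → ℝ) := LinearMap.ker c.flip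

def bracketDerived : Submodule ℝ (Fin k → ℝ) := ⨆ x, LinearMap.range (c x)

variable {c}

theorem mem_bracketCenter {z : Fin k → ℝ} : z ∈ bracketCenter c ↔ ∀ x, c x z = 0 := by
  simp [bracketCenter, LinearMap.ext_iff]

theorem bracket_mem_bracketDerived (x y : Fin k → ℝ) : c x y ∈ bracketDerived c :=
  Submodule.mem_iSup_of_mem x ⟨y, rfl⟩

theorem IsCEClosed.apply_bracket_central {ω : (Fin k → ℝ) [⋀^Fin 2]→ₗ[ℝ] ℝ}
    (hω : IsCEClosed c ω) {z : Fin k → ℝ} (hz : z ∈ bracketCenter c) (x y : Fin k → ℝ) :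
    ω ![c x y, z] = 0 := by
  have h : -ω.toBilin (c x y) z + ω.toBilin (c x z) y - ω.toBilin (c y z) x = 0 := hω x y z
  simp only [mem_bracketCenter.mp hz, map_zero, LinearMap.zero_apply, add_zero, sub_zero,
    neg_eq_zero] at h
  exact h

theorem IsCEClosed.finrank_bracketCenter_add_finrank_bracketDerived_le
    {ω : (Fin k → ℝ) [⋀^Fin 2]→ₗ[ℝ] ℝ} (hω : IsCEClosed c ω)
    (hnd : ∀ x, (∀ y, ω ![x, y] = 0) → x = 0) :
    finrank ℝ (bracketCenter c) + finrank ℝ (bracketDerived c) ≤ k := by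
  have hinj : Function.Injective ω.toBilin :=
    (injective_iff_map_eq_zero _).mpr fun x hx => hnd x fun y => LinearMap.congr_fun hx y
  have hmap : (bracketCenter c).map ω.toBilin ≤ (bracketDerived c).dualAnnihilator := by
    rintro _ ⟨z, hz, rfl⟩
    refine (Submodule.mem_dualAnnihilator _).mpr fun w hw => ?_
    refine (iSup_le fun x => ?_ : bracketDerived c ≤ LinearMap.ker (ω.toBilin z)) hw
    rintro _ ⟨y, rfl⟩
    rw [LinearMap.mem_ker, ω.toBilin_swap, ω.toBilin_apply, hω.apply_bracket_central hz, neg_zero]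
  have hdual := Subspace.finrank_add_finrank_dualAnnihilator_eq (bracketDerived c)
  rw [finrank_fin_fun] at hdual
  calc finrank ℝ (bracketCenter c) + finrank ℝ (bracketDerived c)
      = finrank ℝ ((bracketCenter c).map ω.toBilin) + finrank ℝ (bracketDerived c) := by
        rw [(Submodule.equivMapOfInjective _ hinj _).finrank_eq]
    _ ≤ finrank ℝ (bracketDerived c).dualAnnihilator + finrank ℝ (bracketDerived c) := by
        gcongr; exact Submodule.finrank_mono hmap
    _ = k := by rw [add_comm, hdual]

end Bracket

namespace IsLieAlgebraH

variable {c : (Fin 8 → ℝ) →ₗ[ℝ] (Fin 8 → ℝ) →ₗ[ℝ] (Fin 8 → ℝ)}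

theorem apply_eq (hc : IsLieAlgebraH c) (x y : Fin 8 → ℝ) :
    c x y = ![0, 0, x 3 * y 1 - x 1 * y 3, x 1 * y 2 - x 2 * y 1,
      x 5 * y 1 - x 1 * y 5, x 1 * y 4 - x 4 * y 1,
      (x 2 * y 4 - x 4 * y 2) - (x 3 * y 5 - x 5 * y 3),
      (x 2 * y 5 - x 5 * y 2) + (x 3 * y 4 - x 4 * y 3)] := by
  obtain ⟨-, h0, h1, h2, h3, h4, h5, h6, h7⟩ := hc
  funext i
  fin_cases i
  · exact h0 x y
  · exact h1 x y
  all_goals simp only [Fin.reduceFinMk, Fin.isValue, Matrix.cons_val]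
  · linear_combination -h2 x y
  · linear_combination -h3 x y
  · linear_combination -h4 x y
  · linear_combination -h5 x y
  · linear_combination -h6 x y
  · linear_combination -h7 x y

theorem three_le_finrank_bracketCenter (hc : IsLieAlgebraH c) :
    3 ≤ finrank ℝ (bracketCenter c) := by
  refine card_le_finrank_of_forall_single_mem _ ({0, 6, 7} : Finset (Fin 8)) fun i hi => ?_
  rw [mem_bracketCenter]
  intro x
  simp only [Finset.mem_insert, Finset.mem_singleton] at hi
  rcases hi with rfl | rfl | rfl <;> (rw [hc.apply_eq]; ext j; fin_cases j <;> simp)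

theorem six_le_finrank_bracketDerived (hc : IsLieAlgebraH c) :
    6 ≤ finrank ℝ (bracketDerived c) := by
  refine card_le_finrank_of_forall_single_mem _ ({2, 3, 4, 5, 6, 7} : Finset (Fin 8))
    fun i hi => ?_
  simp only [Finset.mem_insert, Finset.mem_singleton] at hi
  obtain ⟨x, y, hxy⟩ : ∃ x y : Fin 8 → ℝ, c x y = Pi.single i 1 := by
    rcases hi with rfl | rfl | rfl | rfl | rfl | rfl
    · exact ⟨Pi.single 3 1, Pi.single 1 1, by rw [hc.apply_eq]; ext j; fin_cases j <;> simp⟩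
    · exact ⟨Pi.single 1 1, Pi.single 2 1, by rw [hc.apply_eq]; ext j; fin_cases j <;> simp⟩
    · exact ⟨Pi.single 5 1, Pi.single 1 1, by rw [hc.apply_eq]; ext j; fin_cases j <;> simp⟩
    · exact ⟨Pi.single 1 1, Pi.single 4 1, by rw [hc.apply_eq]; ext j; fin_cases j <;> simp⟩
    · exact ⟨Pi.single 2 1, Pi.single 4 1, by rw [hc.apply_eq]; ext j; fin_cases j <;> simp⟩
    · exact ⟨Pi.single 2 1, Pi.single 5 1, by rw [hc.apply_eq]; ext j; fin_cases j <;> simp⟩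
  exact hxy ▸ bracket_mem_bracketDerived x y

end IsLieAlgebraH

/-- The `8`-dimensional Lie algebra `𝔥` admits no invariant symplectic form: there is no
closed `ω ∈ Λ²𝔥*` that is nondegenerate as a bilinear form on `𝔥`. -/
theorem h_no_invariant_symplectic_form
    (c : (Fin 8 → ℝ) →ₗ[ℝ] (Fin 8 → ℝ) →ₗ[ℝ] (Fin 8 → ℝ))
    (hc : IsLieAlgebraH c) :
    ¬∃ ω : (Fin 8 → ℝ) [⋀^Fin 2]→ₗ[ℝ] ℝ, IsCEClosed c ω ∧
      ∀ x : Fin 8 → ℝ, (∀ y : Fin 8 → ℝ, ω ![x, y] = 0) → x = 0 := by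
  rintro ⟨ω, hω, hnd⟩
  have hdim := hω.finrank_bracketCenter_add_finrank_bracketDerived_le hnd
  have hcenter := hc.three_le_finrank_bracketCenter
  have hderived := hc.six_le_finrank_bracketDerived
  omega
end

section
/- Let 𝔤 be the 6-dimensional Lie algebra of the complex Heisenberg group U₃(ℂ) viewed as a real Lie algebra, with dual basis x₁, x₂, y₁, y₂, z₁, z₂ satisfying dx_i = dy_i = 0, dz₁ = -x₁∧y₁ + x₂∧y₂, dz₂ = -x₁∧y₂ - x₂∧y₁. Then there exists a closed 2-form ω ∈ Λ²𝔤* with ω³ ≠ 0 (e.g., ω = x₁∧z₁ + y₁∧z₂ + x₂∧y₂). -/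
open scoped BigOperators

/-- `𝔤` is the Lie algebra of the complex Heisenberg group `U₃(ℂ)` viewed as a real Lie
algebra `Fin 6 → ℝ` with bracket `c`; the conditions express, via the Chevalley–Eilenberg
differential `(dφ)(x,y) = -φ [x,y]`, that the dual basis `x₁, x₂, y₁, y₂, z₁, z₂`
(coordinates `0,…,5`) satisfies `dxᵢ = dyᵢ = 0`, `dz₁ = -x₁∧y₁ + x₂∧y₂`,
`dz₂ = -x₁∧y₂ - x₂∧y₁`. -/
def IsComplexHeisenberg (c : (Fin 6 → ℝ) →ₗ[ℝ] (Fin 6 → ℝ) →ₗ[ℝ] (Fin 6 → ℝ)) : Prop :=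
  (∀ x, c x x = 0) ∧
  (∀ x y, c x y 0 = 0) ∧
  (∀ x y, c x y 1 = 0) ∧
  (∀ x y, c x y 2 = 0) ∧
  (∀ x y, c x y 3 = 0) ∧
  (∀ x y : Fin 6 → ℝ, -(c x y 4) = -(x 0 * y 2 - x 2 * y 0) + (x 1 * y 3 - x 3 * y 1)) ∧
  (∀ x y : Fin 6 → ℝ, -(c x y 5) = -(x 0 * y 3 - x 3 * y 0) - (x 1 * y 2 - x 2 * y 1))

/-! The form `ω = x₁∧z₁ − x₂∧z₂ + y₁∧y₂` is closed, since in `dω = −x₁∧dz₁ + x₂∧dz₂` the two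
terms are `−x₁∧x₂∧y₂` and `+x₁∧x₂∧y₂`. (The form `x₁∧z₁ + y₁∧z₂ + x₂∧y₂` is not closed for these
structure equations.) On the frame dual to the pairs `(x₁, z₁), (z₂, x₂), (y₁, y₂)` its Gram
matrix is the standard symplectic one, for which the only permutations contributing to `ω³` are
the block permutations `(i, j) ↦ (τ i, εᵢ j)`, each contributing `+1`; hence `ω³` evaluates to
`3! · 2³ ≠ 0` there. -/

open Equiv Equiv.Perm
open scoped Nat

namespace Equiv.Perm

variable {α β : Type*}

theorem prodShear_injective [Nonempty β] :
    Function.Injective fun te : Perm α × (α → Perm β) =>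
      (prodShear te.1 te.2 : Perm (α × β)) := by
  rintro ⟨τ, ε⟩ ⟨τ', ε'⟩ h
  have happ : ∀ a b, (τ a, ε a b) = (τ' a, ε' a b) := fun a b =>
    congrFun (congrArg DFunLike.coe h) (a, b)
  obtain ⟨b₀⟩ := ‹Nonempty β›
  exact Prod.ext (Equiv.ext fun a => congrArg Prod.fst (happ a b₀))
    (funext fun a => Equiv.ext fun b => congrArg Prod.snd (happ a b))

theorem sign_prodShear [Fintype α] [DecidableEq α] [Fintype β] [DecidableEq β]
    (τ : Perm α) (ε : α → Perm β) :
    sign (prodShear τ ε) = sign τ ^ Fintype.card β * ∏ a, sign (ε a) := by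
  have hsplit : prodShear τ ε = prodCongrLeft (fun _ => τ) * prodCongrRight ε := rfl
  rw [hsplit, sign_mul, sign_prodCongrLeft, sign_prodCongrRight, Finset.prod_const,
    Finset.card_univ]

theorem exists_prodShear_eq [Finite β] [Nonempty β] (σ : Perm (α × β))
    (h : ∀ a b b', (σ (a, b)).1 = (σ (a, b')).1) : ∃ τ ε, prodShear τ ε = σ := by
  obtain ⟨b₀⟩ := ‹Nonempty β›
  have hε : ∀ a, Function.Bijective fun b => (σ (a, b)).2 := fun a =>
    Finite.injective_iff_bijective.mp fun b b' hbb' =>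
      congrArg Prod.snd (σ.injective (Prod.ext (h a b b') hbb'))
  have hτ : Function.Bijective fun a => (σ (a, b₀)).1 := by
    refine ⟨fun a a' haa' => ?_, fun k => ?_⟩
    · obtain ⟨b, hb⟩ := (hε a).2 (σ (a', b₀)).2
      exact congrArg Prod.fst (σ.injective (Prod.ext ((h a b b₀).trans haa') hb))
    · obtain ⟨⟨a, b⟩, hab⟩ := σ.surjective (k, b₀)
      exact ⟨a, (h a b₀ b).trans (congrArg Prod.fst hab)⟩
  exact ⟨.ofBijective _ hτ, fun a => .ofBijective _ (hε a),
    Equiv.ext fun ⟨a, b⟩ => Prod.ext (h a b₀ b) rfl⟩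

end Equiv.Perm

def stdSymplectic (n : ℕ) : Matrix (Fin n × Fin 2) (Fin n × Fin 2) ℝ :=
  fun p q => if p.1 = q.1 then !![0, 1; -1, 0] p.2 q.2 else 0

theorem fst_eq_of_stdSymplectic_ne_zero {n : ℕ} {p q : Fin n × Fin 2}
    (h : stdSymplectic n p q ≠ 0) : p.1 = q.1 :=
  of_not_not fun hpq => h (if_neg hpq)

theorem stdSymplectic_apply_perm {n : ℕ} (k : Fin n) (e : Perm (Fin 2)) :
    stdSymplectic n (k, e 0) (k, e 1) = sign e := by
  obtain rfl | rfl : e = 1 ∨ e = swap 0 1 := by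
    revert e
    decide
  all_goals simp [stdSymplectic]

theorem sum_sign_mul_prod_stdSymplectic (n : ℕ) :
    ∑ σ : Perm (Fin n × Fin 2),
        (sign σ : ℝ) * ∏ i, stdSymplectic n (σ (i, 0)) (σ (i, 1)) = n ! * 2 ^ n := by
  have hcard : (Fintype.card (Perm (Fin n) × (Fin n → Perm (Fin 2))) : ℝ) = n ! * 2 ^ n := by
    simp [Fintype.card_perm]
  rw [← hcard, Fintype.card_eq_sum_ones, Nat.cast_sum, Nat.cast_one]
  refine (Fintype.sum_of_injective _ prodShear_injective _ _
    (fun σ hσ => ?_) fun ⟨τ, ε⟩ => ?_).symm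
  · by_contra hne
    have hblock : ∀ i, (σ (i, 0)).1 = (σ (i, 1)).1 := fun i =>
      fst_eq_of_stdSymplectic_ne_zero
        (Finset.prod_ne_zero_iff.mp (right_ne_zero_of_mul hne) i (Finset.mem_univ i))
    obtain ⟨τ, ε, rfl⟩ := exists_prodShear_eq σ fun i b b' => by
      fin_cases b <;> fin_cases b' <;> simp [hblock i]
    exact hσ ⟨(τ, ε), rfl⟩
  · have hsq : ∀ u : ℤˣ, ((u : ℤ) : ℝ) * ((u : ℤ) : ℝ) = 1 := fun u => by
      rw [← Int.cast_mul, ← Units.val_mul, Int.units_mul_self, Units.val_one, Int.cast_one]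
    simp only [prodShear_apply, stdSymplectic_apply_perm, sign_prodShear]
    rw [Fintype.card_fin, Int.units_sq, one_mul, Units.coe_prod, Int.cast_prod,
      ← Finset.prod_mul_distrib]
    exact (Finset.prod_eq_one fun i _ => hsq _).symm

theorem wedgePow_comp_finProdFinEquiv_symm {V : Type*} (β : (Fin 2 → V) → ℝ) (n : ℕ)
    (w : Fin n × Fin 2 → V) :
    wedgePow β n (w ∘ finProdFinEquiv.symm) =
      ∑ σ : Perm (Fin n × Fin 2),
        (sign σ : ℝ) * ∏ i, β ![w (σ (i, 0)), w (σ (i, 1))] := by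
  rw [wedgePow, ← (finProdFinEquiv.permCongr).sum_comp]
  simp [Equiv.permCongr_apply, sign_permCongr]

theorem wedgePow_eq_of_gram_eq_stdSymplectic {V : Type*} (β : (Fin 2 → V) → ℝ) {n : ℕ}
    {w : Fin n × Fin 2 → V} (hw : ∀ p q, β ![w p, w q] = stdSymplectic n p q) :
    wedgePow β n (w ∘ finProdFinEquiv.symm) = n ! * 2 ^ n := by
  simp only [wedgePow_comp_finProdFinEquiv_symm, hw, sum_sign_mul_prod_stdSymplectic]

def wedge {R M : Type*} [CommRing R] [AddCommGroup M] [Module R M] (f g : Module.Dual R M) :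
    M [⋀^Fin 2]→ₗ[R] R :=
  Matrix.detRowAlternating.compLinearMap (LinearMap.pi ![f, g])

@[simp]
theorem wedge_apply {R M : Type*} [CommRing R] [AddCommGroup M] [Module R M]
    (f g : Module.Dual R M) (v : Fin 2 → M) :
    wedge f g v = f (v 0) * g (v 1) - f (v 1) * g (v 0) := by
  change Matrix.det (Matrix.of fun i j => ![f, g] j (v i)) = _
  simp [Matrix.det_fin_two, mul_comm]

open LinearMap in
def iwasawaForm : (Fin 6 → ℝ) [⋀^Fin 2]→ₗ[ℝ] ℝ :=
  wedge (proj 0) (proj 4) - wedge (proj 1) (proj 5) + wedge (proj 2) (proj 3)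

theorem IsComplexHeisenberg.isCEClosed_iwasawaForm
    {c : (Fin 6 → ℝ) →ₗ[ℝ] (Fin 6 → ℝ) →ₗ[ℝ] (Fin 6 → ℝ)}
    (hc : IsComplexHeisenberg c) :
    IsCEClosed c iwasawaForm := by
  obtain ⟨-, h0, h1, h2, h3, h4, h5⟩ := hc
  intro x y z
  have e4 : ∀ a b, c a b 4 = (a 0 * b 2 - a 2 * b 0) - (a 1 * b 3 - a 3 * b 1) :=
    fun a b => by linear_combination -h4 a b
  have e5 : ∀ a b, c a b 5 = (a 0 * b 3 - a 3 * b 0) + (a 1 * b 2 - a 2 * b 1) :=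
    fun a b => by linear_combination -h5 a b
  simp only [iwasawaForm, AlternatingMap.add_apply, AlternatingMap.sub_apply, wedge_apply,
    LinearMap.proj_apply, Matrix.cons_val_zero, Matrix.cons_val_one,
    h0, h1, h2, h3, e4, e5]
  ring

def iwasawaFrame (p : Fin 3 × Fin 2) : Fin 6 → ℝ :=
  Pi.single (![![0, 4], ![5, 1], ![2, 3]] p.1 p.2) 1

theorem iwasawaForm_iwasawaFrame (p q : Fin 3 × Fin 2) :
    iwasawaForm ![iwasawaFrame p, iwasawaFrame q] = stdSymplectic 3 p q := by
  obtain ⟨i, a⟩ := p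
  obtain ⟨j, b⟩ := q
  fin_cases i <;> fin_cases a <;> fin_cases j <;> fin_cases b <;>
    simp [iwasawaForm, iwasawaFrame, stdSymplectic]

/-- There exists a closed `2`-form `ω ∈ Λ²𝔤*` with `ω³ ≠ 0` (e.g.
`ω = x₁∧z₁ + y₁∧z₂ + x₂∧y₂`), i.e. the Iwasawa Lie algebra carries an invariant
symplectic form. -/
theorem complexHeisenberg_symplectic
    (c : (Fin 6 → ℝ) →ₗ[ℝ] (Fin 6 → ℝ) →ₗ[ℝ] (Fin 6 → ℝ))
    (hc : IsComplexHeisenberg c) :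
    ∃ ω : (Fin 6 → ℝ) [⋀^Fin 2]→ₗ[ℝ] ℝ,
      IsCEClosed c ω ∧ ∃ v : Fin (3 * 2) → (Fin 6 → ℝ), wedgePow ⇑ω 3 v ≠ 0 := by
  refine ⟨iwasawaForm, hc.isCEClosed_iwasawaForm, iwasawaFrame ∘ finProdFinEquiv.symm, ?_⟩
  rw [wedgePow_eq_of_gram_eq_stdSymplectic _ iwasawaForm_iwasawaFrame]
  positivity
end
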